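/- Let K be a category, G ≤ Aut(K) a translative automorphism group, and T a transversal of the object orbits with natural annotation A_T (regarded as an annotation of the orbit category K/G, on which it is well defined since A_T is constant on arrow orbits). Then the unfolding of the representation (K/G, A_T, G) is isomorphic to K. -/
import Mathlib


set_option linter.unusedVariables false

/-- A small category, presented as a directed graph with a partial composition
that is defined exactly on composable pairs of arrows. -/
structure SmallCat where
  Obj : Type
  Arr : Type
  src : Arr → Obj
  tgt : Arr → Obj
  id : Obj → Arr
  src_id : ∀ x, src (id x) = x
  tgt_id : ∀ x, tgt (id x) = x
  comp : ∀ a b, tgt a = src b → Arr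
  src_comp : ∀ a b h, src (comp a b h) = src a
  tgt_comp : ∀ a b h, tgt (comp a b h) = tgt b
  id_comp : ∀ a, comp (id (src a)) a (tgt_id (src a)) = a
  comp_id : ∀ a, comp a (id (tgt a)) ((src_id (tgt a)).symm) = a
  assoc : ∀ a b c (hab : tgt a = src b) (hbc : tgt b = src c),
    comp (comp a b hab) c (by rw [tgt_comp]; exact hbc) =
    comp a (comp b c hbc) (by rw [src_comp]; exact hab)

/-- An action of a group `G` on a small category `K` by category automorphisms,
written exponentially (left-associative: `a^(g*h) = (a^g)^h`). -/
structure CatAction (G : Type) [Group G] (K : SmallCat) where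
  onObj : G → K.Obj → K.Obj
  onArr : G → K.Arr → K.Arr
  onObj_one : ∀ x, onObj 1 x = x
  onObj_mul : ∀ g h x, onObj (g * h) x = onObj h (onObj g x)
  onArr_one : ∀ a, onArr 1 a = a
  onArr_mul : ∀ g h a, onArr (g * h) a = onArr h (onArr g a)
  src_onArr : ∀ g a, K.src (onArr g a) = onObj g (K.src a)
  tgt_onArr : ∀ g a, K.tgt (onArr g a) = onObj g (K.tgt a)
  onArr_id : ∀ g x, onArr g (K.id x) = K.id (onObj g x)
  onArr_comp : ∀ g a b (h : K.tgt a = K.src b),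
    onArr g (K.comp a b h) = K.comp (onArr g a) (onArr g b)
      (by rw [tgt_onArr, src_onArr, h])

/-- The action is semi-regular: only the unit fixes an object or an arrow. -/
def SemiRegular {G : Type} [Group G] {K : SmallCat} (ρ : CatAction G K) : Prop :=
  (∀ g x, ρ.onObj g x = x → g = 1) ∧ (∀ g a, ρ.onArr g a = a → g = 1)

/-- Orbit of an object. -/
def orbitO {G : Type} [Group G] {K : SmallCat} (ρ : CatAction G K) (x : K.Obj) : Set K.Obj :=
  {y | ∃ g : G, ρ.onObj g x = y}

/-- The arrows of the full subcategory generated by the orbit of `x`. -/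
def orbitA {G : Type} [Group G] {K : SmallCat} (ρ : CatAction G K) (x : K.Obj) : Set K.Arr :=
  {a | K.src a ∈ orbitO ρ x ∧ K.tgt a ∈ orbitO ρ x}

/-- The setoid of object orbits. -/
def objSetoid {G : Type} [Group G] {K : SmallCat} (ρ : CatAction G K) : Setoid K.Obj where
  r x y := ∃ g : G, ρ.onObj g x = y
  iseqv := by
    constructor
    · exact fun x => ⟨1, ρ.onObj_one x⟩
    · rintro x y ⟨g, rfl⟩
      exact ⟨g⁻¹, by rw [← ρ.onObj_mul, mul_inv_cancel, ρ.onObj_one]⟩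
    · rintro x y z ⟨g, rfl⟩ ⟨h, rfl⟩
      exact ⟨g * h, by rw [ρ.onObj_mul]⟩

/-- The setoid of arrow orbits. -/
def arrSetoid {G : Type} [Group G] {K : SmallCat} (ρ : CatAction G K) : Setoid K.Arr where
  r a b := ∃ g : G, ρ.onArr g a = b
  iseqv := by
    constructor
    · exact fun a => ⟨1, ρ.onArr_one a⟩
    · rintro a b ⟨g, rfl⟩
      exact ⟨g⁻¹, by rw [← ρ.onArr_mul, mul_inv_cancel, ρ.onArr_one]⟩
    · rintro a b c ⟨g, rfl⟩ ⟨h, rfl⟩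
      exact ⟨g * h, by rw [ρ.onArr_mul]⟩

/-- The source of an arrow orbit. -/
def srcQ {G : Type} [Group G] {K : SmallCat} (ρ : CatAction G K) :
    Quotient (arrSetoid ρ) → Quotient (objSetoid ρ) :=
  Quotient.lift (fun a => Quotient.mk (objSetoid ρ) (K.src a)) (by
    rintro a b ⟨g, rfl⟩
    exact Quotient.sound ⟨g, (ρ.src_onArr g a).symm⟩)

/-- The target of an arrow orbit. -/
def tgtQ {G : Type} [Group G] {K : SmallCat} (ρ : CatAction G K) :
    Quotient (arrSetoid ρ) → Quotient (objSetoid ρ) :=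
  Quotient.lift (fun a => Quotient.mk (objSetoid ρ) (K.tgt a)) (by
    rintro a b ⟨g, rfl⟩
    exact Quotient.sound ⟨g, (ρ.tgt_onArr g a).symm⟩)

/-- The identity arrow orbit of an object orbit. -/
def idQ {G : Type} [Group G] {K : SmallCat} (ρ : CatAction G K) :
    Quotient (objSetoid ρ) → Quotient (arrSetoid ρ) :=
  Quotient.lift (fun x => Quotient.mk (arrSetoid ρ) (K.id x)) (by
    rintro x y ⟨g, rfl⟩
    exact Quotient.sound ⟨g, ρ.onArr_id g x⟩)

/-- `CompRelQ ρ α β γ` expresses that in the orbit category the composite of the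
arrow orbits `α` and `β` is `γ`, i.e. that `γ` is the orbit of a composite of
composable representatives of `α` and `β`. -/
def CompRelQ {G : Type} [Group G] {K : SmallCat} (ρ : CatAction G K)
    (α β γ : Quotient (arrSetoid ρ)) : Prop :=
  ∃ (a b : K.Arr) (h : K.tgt a = K.src b),
    Quotient.mk (arrSetoid ρ) a = α ∧ Quotient.mk (arrSetoid ρ) b = β ∧
    Quotient.mk (arrSetoid ρ) (K.comp a b h) = γ

/-- An annotation: a contravariant homomorphism from a small category into a group. -/
structure Annotation (K : SmallCat) (G : Type) [Group G] where
  map : K.Arr → G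
  map_id : ∀ x, map (K.id x) = 1
  map_comp : ∀ a b (h : K.tgt a = K.src b), map (K.comp a b h) = map b * map a

/-- The partial operation `⊙` of a representation `(K, A, G)`. -/
def odot {G : Type} [Group G] {K : SmallCat} (A : Annotation K G) (p q : K.Arr × G)
    (h : K.tgt p.1 = K.src q.1) (_ : q.2 = A.map p.1 * p.2) : K.Arr × G :=
  (K.comp p.1 q.1 h, p.2)

/-- The unfolding `E(K,A,G)` of a representation `(K,A,G)`. -/
def Unfolding (K : SmallCat) {G : Type} [Group G] (A : Annotation K G) : SmallCat where
  Obj := K.Obj × G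
  Arr := K.Arr × G
  src p := (K.src p.1, p.2)
  tgt p := (K.tgt p.1, A.map p.1 * p.2)
  id x := (K.id x.1, x.2)
  src_id x := by simp [K.src_id]
  tgt_id x := by simp [K.tgt_id, A.map_id]
  comp p q h := (K.comp p.1 q.1 (congrArg Prod.fst h), p.2)
  src_comp p q h := by simp [K.src_comp]
  tgt_comp p q h := by
    have h2 : A.map p.1 * p.2 = q.2 := congrArg Prod.snd h
    simp [K.tgt_comp, A.map_comp, mul_assoc, h2]
  id_comp p := by
    refine Prod.ext ?_ rfl
    exact K.id_comp p.1
  comp_id p := by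
    refine Prod.ext ?_ rfl
    exact K.comp_id p.1
  assoc p q s hpq hqs := by
    refine Prod.ext ?_ rfl
    exact K.assoc p.1 q.1 s.1 (congrArg Prod.fst hpq) (congrArg Prod.fst hqs)

/-- A homomorphism (functor) between small categories. -/
structure CatHom (K L : SmallCat) where
  onObj : K.Obj → L.Obj
  onArr : K.Arr → L.Arr
  src_onArr : ∀ a, L.src (onArr a) = onObj (K.src a)
  tgt_onArr : ∀ a, L.tgt (onArr a) = onObj (K.tgt a)
  onArr_id : ∀ x, onArr (K.id x) = L.id (onObj x)
  onArr_comp : ∀ a b (h : K.tgt a = K.src b),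
    onArr (K.comp a b h) = L.comp (onArr a) (onArr b)
      (by rw [tgt_onArr, src_onArr, h])

/-- A functor is full. -/
def IsFull {K L : SmallCat} (F : CatHom K L) : Prop :=
  ∀ (x y : K.Obj) (b : L.Arr), L.src b = F.onObj x → L.tgt b = F.onObj y →
    ∃ a : K.Arr, K.src a = x ∧ K.tgt a = y ∧ F.onArr a = b

/-- A functor is faithful. -/
def IsFaithful {K L : SmallCat} (F : CatHom K L) : Prop :=
  ∀ a a' : K.Arr, K.src a = K.src a' → K.tgt a = K.tgt a' → F.onArr a = F.onArr a' → a = a'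

/-- A translative automorphism group action: semi-regular, and any two orbits
generate isomorphic full subcategories, by an isomorphism commuting with the action. -/
def Translative {G : Type} [Group G] {K : SmallCat} (ρ : CatAction G K) : Prop :=
  SemiRegular ρ ∧
  ∀ a b : K.Obj, ∃ (φo : K.Obj → K.Obj) (φa : K.Arr → K.Arr),
    Set.BijOn φo (orbitO ρ a) (orbitO ρ b) ∧
    Set.BijOn φa (orbitA ρ a) (orbitA ρ b) ∧
    (∀ f ∈ orbitA ρ a, K.src (φa f) = φo (K.src f)) ∧
    (∀ f ∈ orbitA ρ a, K.tgt (φa f) = φo (K.tgt f)) ∧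
    (∀ x ∈ orbitO ρ a, φa (K.id x) = K.id (φo x)) ∧
    (∀ (f f' : K.Arr) (h : K.tgt f = K.src f'), f ∈ orbitA ρ a → f' ∈ orbitA ρ a →
      ∀ h', φa (K.comp f f' h) = K.comp (φa f) (φa f') h') ∧
    (∀ (g : G), ∀ x ∈ orbitO ρ a, φo (ρ.onObj g x) = ρ.onObj g (φo x)) ∧
    (∀ (g : G), ∀ f ∈ orbitA ρ a, φa (ρ.onArr g f) = ρ.onArr g (φa f))

/-- `T` is a transversal of the object orbits. -/
def IsTransversal {G : Type} [Group G] {K : SmallCat} (ρ : CatAction G K)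
    (T : Set K.Obj) : Prop :=
  ∀ x : K.Obj, ∃! t, t ∈ T ∧ t ∈ orbitO ρ x

/-- The natural annotation associated with the canonical automorphisms `gT`. -/
def natAnn {G : Type} [Group G] {K : SmallCat} (ρ : CatAction G K)
    (gT : K.Obj → G) (a : K.Arr) : G :=
  gT (K.tgt a) * (gT (K.src a))⁻¹

/-- `RightNormalWith ρ C` : the map `C` witnesses that `ρ` is right-normal:
in the orbit category, loop orbits can be moved from the left of an arrow orbit
to its right. -/
def RightNormalWith {G : Type} [Group G] {K : SmallCat} (ρ : CatAction G K)
    (C : Quotient (arrSetoid ρ) → Quotient (arrSetoid ρ) → Quotient (arrSetoid ρ)) : Prop :=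
  (∀ (a x : K.Arr),
    srcQ ρ (Quotient.mk (arrSetoid ρ) x) = srcQ ρ (Quotient.mk (arrSetoid ρ) a) →
    tgtQ ρ (Quotient.mk (arrSetoid ρ) x) = srcQ ρ (Quotient.mk (arrSetoid ρ) a) →
    ((srcQ ρ (C (Quotient.mk (arrSetoid ρ) a) (Quotient.mk (arrSetoid ρ) x)) =
        tgtQ ρ (Quotient.mk (arrSetoid ρ) a) ∧
      tgtQ ρ (C (Quotient.mk (arrSetoid ρ) a) (Quotient.mk (arrSetoid ρ) x)) =
        tgtQ ρ (Quotient.mk (arrSetoid ρ) a)) ∧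
      (∀ (x' a' : K.Arr) (h1 : K.tgt x' = K.src a'),
        Quotient.mk (arrSetoid ρ) x' = Quotient.mk (arrSetoid ρ) x →
        Quotient.mk (arrSetoid ρ) a' = Quotient.mk (arrSetoid ρ) a →
        ∀ (a'' c : K.Arr) (h2 : K.tgt a'' = K.src c),
          Quotient.mk (arrSetoid ρ) a'' = Quotient.mk (arrSetoid ρ) a →
          Quotient.mk (arrSetoid ρ) c =
            C (Quotient.mk (arrSetoid ρ) a) (Quotient.mk (arrSetoid ρ) x) →
          Quotient.mk (arrSetoid ρ) (K.comp x' a' h1) =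
            Quotient.mk (arrSetoid ρ) (K.comp a'' c h2)))) ∧
  (∀ a : K.Arr,
    C (Quotient.mk (arrSetoid ρ) a) (Quotient.mk (arrSetoid ρ) (K.id (K.src a))) =
      Quotient.mk (arrSetoid ρ) (K.id (K.tgt a)))

/-- The action `ρ` is right-normal. -/
def RightNormal {G : Type} [Group G] {K : SmallCat} (ρ : CatAction G K) : Prop :=
  ∃ C, RightNormalWith ρ C

/-- An arrow orbit is an identity orbit. -/
def IsIdQ {G : Type} [Group G] {K : SmallCat} (ρ : CatAction G K)
    (α : Quotient (arrSetoid ρ)) : Prop :=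
  ∃ x : K.Obj, α = Quotient.mk (arrSetoid ρ) (K.id x)

/-- An arrow of the orbit category is reducible: it is an arrow with the same
endpoints followed by a non-identity loop. -/
def ReducibleQ {G : Type} [Group G] {K : SmallCat} (ρ : CatAction G K)
    (β : Quotient (arrSetoid ρ)) : Prop :=
  ∃ b l, CompRelQ ρ b l β ∧ tgtQ ρ b = tgtQ ρ β ∧ ¬ IsIdQ ρ l

/-- An arrow of the orbit category is irreducible. -/
def IrreducibleQ {G : Type} [Group G] {K : SmallCat} (ρ : CatAction G K)
    (β : Quotient (arrSetoid ρ)) : Prop :=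
  ¬ ReducibleQ ρ β

/-- The orbit category is uniquely representable by irreducible arrows,
with irreducible part `r` and loop part `n`. -/
def UniqRep {G : Type} [Group G] {K : SmallCat} (ρ : CatAction G K)
    (r n : Quotient (arrSetoid ρ) → Quotient (arrSetoid ρ)) : Prop :=
  (∀ α, IrreducibleQ ρ (r α) ∧ srcQ ρ (r α) = srcQ ρ α ∧ tgtQ ρ (r α) = tgtQ ρ α ∧
    srcQ ρ (n α) = tgtQ ρ α ∧ tgtQ ρ (n α) = tgtQ ρ α ∧ CompRelQ ρ (r α) (n α) α) ∧
  (∀ α b l, CompRelQ ρ b l α → tgtQ ρ b = tgtQ ρ α → srcQ ρ l = tgtQ ρ l →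
    IrreducibleQ ρ b → b = r α ∧ l = n α)

/-- A right-groupal category: a small category whose objects form a group which
acts on the category by a left-associative automorphism action, compatible with
right multiplication on the objects. -/
structure RGC where
  K : SmallCat
  mul : K.Obj → K.Obj → K.Obj
  one : K.Obj
  inv : K.Obj → K.Obj
  mul_assoc : ∀ x y z, mul (mul x y) z = mul x (mul y z)
  one_mul : ∀ x, mul one x = x
  mul_one : ∀ x, mul x one = x
  inv_mul : ∀ x, mul (inv x) x = one
  mul_inv : ∀ x, mul x (inv x) = one
  act : K.Arr → K.Obj → K.Arr
  act_one : ∀ a, act a one = a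
  act_mul : ∀ a x y, act (act a x) y = act a (mul x y)
  src_act : ∀ a x, K.src (act a x) = mul (K.src a) x
  tgt_act : ∀ a x, K.tgt (act a x) = mul (K.tgt a) x
  act_id : ∀ y x, act (K.id y) x = K.id (mul y x)
  act_comp : ∀ a b (h : K.tgt a = K.src b) x,
    act (K.comp a b h) x = K.comp (act a x) (act b x) (by rw [tgt_act, src_act, h])

/-- A groupal category: a right-groupal category together with a commuting
second (left-multiplication style) action satisfying the interchange law. -/
structure GroupalCat extends RGC where
  lact : K.Obj → K.Arr → K.Arr
  lact_one : ∀ a, lact one a = a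
  lact_mul : ∀ x y a, lact x (lact y a) = lact (mul x y) a
  src_lact : ∀ x a, K.src (lact x a) = mul x (K.src a)
  tgt_lact : ∀ x a, K.tgt (lact x a) = mul x (K.tgt a)
  lact_id : ∀ x y, lact x (K.id y) = K.id (mul x y)
  lact_comp : ∀ x a b (h : K.tgt a = K.src b),
    lact x (K.comp a b h) = K.comp (lact x a) (lact x b) (by rw [tgt_lact, src_lact, h])
  lact_act : ∀ x a y, lact x (act a y) = act (lact x a) y
  interchange : ∀ (a b : K.Arr),
    K.comp (act a (K.src b)) (lact (K.tgt a) b) (by rw [tgt_act, src_lact]) =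
    K.comp (lact (K.src a) b) (act a (K.tgt b)) (by rw [tgt_lact, src_act])

/-- A po-group `P`, viewed as the simple category with a unique arrow `x → y` iff `x ≤ y`. -/
def poCat (P : Type) [Group P] [PartialOrder P] : SmallCat where
  Obj := P
  Arr := {p : P × P // p.1 ≤ p.2}
  src p := p.1.1
  tgt p := p.1.2
  id x := ⟨(x, x), le_refl x⟩
  src_id x := rfl
  tgt_id x := rfl
  comp a b h := ⟨(a.1.1, b.1.2), a.2.trans ((show (a.1).2 = (b.1).1 from h).trans_le b.2)⟩
  src_comp a b h := rfl
  tgt_comp a b h := rfl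
  id_comp a := rfl
  comp_id a := rfl
  assoc a b c hab hbc := rfl

section Aux
variable {G : Type} [Group G] {K : SmallCat}

lemma obj_cancel (ρ : CatAction G K) (hsr : SemiRegular ρ) {g h : G} {x : K.Obj}
    (e : ρ.onObj g x = ρ.onObj h x) : g = h := by
  have h1 : ρ.onObj (g * h⁻¹) x = x := by
    rw [ρ.onObj_mul, e, ← ρ.onObj_mul, mul_inv_cancel, ρ.onObj_one]
  have := hsr.1 _ _ h1
  have := mul_inv_eq_one.mp this
  exact this

lemma comp_congr (K : SmallCat) {a a' b b' : K.Arr} (ha : a = a') (hb : b = b')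
    (h : K.tgt a = K.src b) (h' : K.tgt a' = K.src b') :
    K.comp a b h = K.comp a' b' h' := by subst ha; subst hb; rfl

end Aux

/-- With `G ≤ Aut K` translative, `T` a transversal with canonical
automorphisms `gT`, and `A_T` the natural annotation (regarded, via `AQ`, as an
annotation of the orbit category `K/G`, on which it is well defined), the
unfolding of the representation `(K/G, A_T, G)` is isomorphic to `K`:
there are bijections from the objects `(K/G)-orbits × G` and arrows
`(K/G)-orbits × G` of the unfolding to the objects and arrows of `K`
transforming sources, targets, identities and composition of the unfolding
into those of `K`. -/
theorem unfolding_of_orbit_representation_iso {G : Type} [Group G] (K : SmallCat)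
    (ρ : CatAction G K) (htr : Translative ρ)
    (T : Set K.Obj) (hT : IsTransversal ρ T)
    (gT : K.Obj → G) (hgT : ∀ x, ρ.onObj (gT x)⁻¹ x ∈ T)
    (AQ : Quotient (arrSetoid ρ) → G)
    (hAQ : ∀ a : K.Arr, AQ (Quotient.mk (arrSetoid ρ) a) = natAnn ρ gT a) :
    ∃ (Fo : Quotient (objSetoid ρ) × G → K.Obj)
      (Fa : Quotient (arrSetoid ρ) × G → K.Arr),
      Function.Bijective Fo ∧ Function.Bijective Fa ∧
      (∀ (α : Quotient (arrSetoid ρ)) (g : G),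
        K.src (Fa (α, g)) = Fo (srcQ ρ α, g)) ∧
      (∀ (α : Quotient (arrSetoid ρ)) (g : G),
        K.tgt (Fa (α, g)) = Fo (tgtQ ρ α, AQ α * g)) ∧
      (∀ (ω : Quotient (objSetoid ρ)) (g : G),
        Fa (idQ ρ ω, g) = K.id (Fo (ω, g))) ∧
      (∀ (a b : K.Arr) (h : K.tgt a = K.src b) (g : G)
          (h' : K.tgt (Fa (Quotient.mk (arrSetoid ρ) a, g)) =
            K.src (Fa (Quotient.mk (arrSetoid ρ) b,
              AQ (Quotient.mk (arrSetoid ρ) a) * g))),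
        Fa (Quotient.mk (arrSetoid ρ) (K.comp a b h), g) =
          K.comp (Fa (Quotient.mk (arrSetoid ρ) a, g))
            (Fa (Quotient.mk (arrSetoid ρ) b, AQ (Quotient.mk (arrSetoid ρ) a) * g)) h') := by
  classical
  have hsr : SemiRegular ρ := htr.1
  have objmk : ∀ {x y : K.Obj} (g : G), ρ.onObj g x = y →
      Quotient.mk (objSetoid ρ) x = Quotient.mk (objSetoid ρ) y :=
    fun g h => Quotient.sound ⟨g, h⟩
  have arrmk : ∀ {a b : K.Arr} (g : G), ρ.onArr g a = b →
      Quotient.mk (arrSetoid ρ) a = Quotient.mk (arrSetoid ρ) b :=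
    fun g h => Quotient.sound ⟨g, h⟩
  -- gT is determined by the transversal
  have gT_spec : ∀ (x : K.Obj) (g : G), ρ.onObj g⁻¹ x ∈ T → gT x = g := by
    intro x g hg
    obtain ⟨t, _, huniq⟩ := hT x
    have h1 : ρ.onObj (gT x)⁻¹ x = t :=
      huniq (ρ.onObj (gT x)⁻¹ x) ⟨hgT x, ⟨(gT x)⁻¹, rfl⟩⟩
    have h2 : ρ.onObj g⁻¹ x = t := huniq (ρ.onObj g⁻¹ x) ⟨hg, ⟨g⁻¹, rfl⟩⟩
    have := obj_cancel ρ hsr (h1.trans h2.symm)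
    exact inv_injective this
  set Φo : K.Obj → Quotient (objSetoid ρ) × G :=
    fun x => (Quotient.mk (objSetoid ρ) x, gT x) with hΦo
  set Φa : K.Arr → Quotient (arrSetoid ρ) × G :=
    fun a => (Quotient.mk (arrSetoid ρ) a, gT (K.src a)) with hΦa
  have hΦobij : Function.Bijective Φo := by
    constructor
    · intro x y hxy
      have hq : Quotient.mk (objSetoid ρ) x = Quotient.mk (objSetoid ρ) y :=
        congrArg Prod.fst hxy
      have hg : gT x = gT y := congrArg Prod.snd hxy
      obtain ⟨k, hk⟩ := Quotient.exact hq
      obtain ⟨t, _, huniq⟩ := hT x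
      have h1 : ρ.onObj (gT x)⁻¹ x = t :=
        huniq (ρ.onObj (gT x)⁻¹ x) ⟨hgT x, ⟨(gT x)⁻¹, rfl⟩⟩
      have h2 : ρ.onObj (gT y)⁻¹ y = t := by
        refine huniq (ρ.onObj (gT y)⁻¹ y) ⟨hgT y, ⟨k * (gT y)⁻¹, ?_⟩⟩
        rw [ρ.onObj_mul, hk]
      have h3 : ρ.onObj (gT x)⁻¹ x = ρ.onObj (gT x)⁻¹ y := by
        rw [h1, hg, h2]
      have := congrArg (ρ.onObj (gT x)) h3
      rwa [← ρ.onObj_mul, ← ρ.onObj_mul, inv_mul_cancel, ρ.onObj_one,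
        ρ.onObj_one] at this
    · rintro ⟨ω, g⟩
      obtain ⟨x, rfl⟩ := Quotient.exists_rep ω
      refine ⟨ρ.onObj ((gT x)⁻¹ * g) x, ?_⟩
      have hmem : ρ.onObj g⁻¹ (ρ.onObj ((gT x)⁻¹ * g) x) ∈ T := by
        rw [← ρ.onObj_mul, mul_assoc, mul_inv_cancel, mul_one]
        exact hgT x
      have hgeq : gT (ρ.onObj ((gT x)⁻¹ * g) x) = g := gT_spec _ _ hmem
      have hq : Quotient.mk (objSetoid ρ) (ρ.onObj ((gT x)⁻¹ * g) x) =
          Quotient.mk (objSetoid ρ) x := (objmk ((gT x)⁻¹ * g) rfl).symm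
      show (Quotient.mk (objSetoid ρ) (ρ.onObj ((gT x)⁻¹ * g) x),
        gT (ρ.onObj ((gT x)⁻¹ * g) x)) = (Quotient.mk (objSetoid ρ) x, g)
      rw [hgeq, hq]
  have hΦabij : Function.Bijective Φa := by
    constructor
    · intro a b hab
      have hq : Quotient.mk (arrSetoid ρ) a = Quotient.mk (arrSetoid ρ) b :=
        congrArg Prod.fst hab
      have hg : gT (K.src a) = gT (K.src b) := congrArg Prod.snd hab
      obtain ⟨k, hk⟩ := Quotient.exact hq
      have hsrc : K.src b = ρ.onObj k (K.src a) := by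
        rw [← hk, ρ.src_onArr]
      have hΦsrc : Φo (K.src a) = Φo (K.src b) := by
        show (Quotient.mk (objSetoid ρ) (K.src a), gT (K.src a)) =
          (Quotient.mk (objSetoid ρ) (K.src b), gT (K.src b))
        rw [hg, objmk k hsrc.symm]
      have hsab : K.src a = K.src b := hΦobij.1 hΦsrc
      have hk1 : k = 1 := by
        apply hsr.1 k (K.src a)
        rw [← hsrc, hsab]
      rw [← hk, hk1, ρ.onArr_one]
    · rintro ⟨α, g⟩
      obtain ⟨a, rfl⟩ := Quotient.exists_rep α
      refine ⟨ρ.onArr ((gT (K.src a))⁻¹ * g) a, ?_⟩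
      have hsrc : K.src (ρ.onArr ((gT (K.src a))⁻¹ * g) a)
          = ρ.onObj ((gT (K.src a))⁻¹ * g) (K.src a) := ρ.src_onArr _ _
      have hmem : ρ.onObj g⁻¹ (K.src (ρ.onArr ((gT (K.src a))⁻¹ * g) a)) ∈ T := by
        rw [hsrc, ← ρ.onObj_mul, mul_assoc, mul_inv_cancel, mul_one]
        exact hgT (K.src a)
      have hgeq : gT (K.src (ρ.onArr ((gT (K.src a))⁻¹ * g) a)) = g :=
        gT_spec _ _ hmem
      have hq : Quotient.mk (arrSetoid ρ) (ρ.onArr ((gT (K.src a))⁻¹ * g) a) =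
          Quotient.mk (arrSetoid ρ) a := (arrmk ((gT (K.src a))⁻¹ * g) rfl).symm
      show (Quotient.mk (arrSetoid ρ) (ρ.onArr ((gT (K.src a))⁻¹ * g) a),
          gT (K.src (ρ.onArr ((gT (K.src a))⁻¹ * g) a))) =
        (Quotient.mk (arrSetoid ρ) a, g)
      rw [hgeq, hq]
  set eo := Equiv.ofBijective Φo hΦobij with heo
  set ea := Equiv.ofBijective Φa hΦabij with hea
  have heaapp : ∀ a, ea a = Φa a := fun _ => rfl
  have heoapp : ∀ x, eo x = Φo x := fun _ => rfl
  refine ⟨fun p => eo.symm p, fun p => ea.symm p, eo.symm.bijective,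
    ea.symm.bijective, ?_, ?_, ?_, ?_⟩
  · intro α g
    show K.src (ea.symm (α, g)) = eo.symm (srcQ ρ α, g)
    rw [Equiv.eq_symm_apply, heoapp]
    set a' := ea.symm (α, g) with ha'
    have hΦa' : Φa a' = (α, g) := by rw [← heaapp, ha', Equiv.apply_symm_apply]
    have h1 : Quotient.mk (arrSetoid ρ) a' = α := congrArg Prod.fst hΦa'
    have h2 : gT (K.src a') = g := congrArg Prod.snd hΦa'
    show (Quotient.mk (objSetoid ρ) (K.src a'), gT (K.src a')) = (srcQ ρ α, g)
    rw [h2, ← h1]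
    rfl
  · intro α g
    show K.tgt (ea.symm (α, g)) = eo.symm (tgtQ ρ α, AQ α * g)
    rw [Equiv.eq_symm_apply, heoapp]
    set a' := ea.symm (α, g) with ha'
    have hΦa' : Φa a' = (α, g) := by rw [← heaapp, ha', Equiv.apply_symm_apply]
    have h1 : Quotient.mk (arrSetoid ρ) a' = α := congrArg Prod.fst hΦa'
    have h2 : gT (K.src a') = g := congrArg Prod.snd hΦa'
    have hAQ' : AQ α = gT (K.tgt a') * (gT (K.src a'))⁻¹ := by
      rw [← h1, hAQ]; rfl
    have h3 : gT (K.tgt a') = AQ α * g := by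
      rw [hAQ', h2]; group
    show (Quotient.mk (objSetoid ρ) (K.tgt a'), gT (K.tgt a')) =
      (tgtQ ρ α, AQ α * g)
    rw [h3, ← h1]
    rfl
  · intro ω g
    show ea.symm (idQ ρ ω, g) = K.id (eo.symm (ω, g))
    rw [Equiv.symm_apply_eq, heaapp]
    set x := eo.symm (ω, g) with hx
    have hΦx : Φo x = (ω, g) := by rw [← heoapp, hx, Equiv.apply_symm_apply]
    have h1 : Quotient.mk (objSetoid ρ) x = ω := congrArg Prod.fst hΦx
    have h2 : gT x = g := congrArg Prod.snd hΦx
    show (idQ ρ ω, g) =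
      (Quotient.mk (arrSetoid ρ) (K.id x), gT (K.src (K.id x)))
    rw [K.src_id, h2, ← h1]
    rfl
  · intro a b h g h'
    set a' := ea.symm (Quotient.mk (arrSetoid ρ) a, g) with ha'
    set b' := ea.symm (Quotient.mk (arrSetoid ρ) b,
      AQ (Quotient.mk (arrSetoid ρ) a) * g) with hb'
    have hΦa' : Φa a' = (Quotient.mk (arrSetoid ρ) a, g) := by
      rw [← heaapp, ha', Equiv.apply_symm_apply]
    have hΦb' : Φa b' = (Quotient.mk (arrSetoid ρ) b,
        AQ (Quotient.mk (arrSetoid ρ) a) * g) := by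
      rw [← heaapp, hb', Equiv.apply_symm_apply]
    have hqa : Quotient.mk (arrSetoid ρ) a' = Quotient.mk (arrSetoid ρ) a :=
      congrArg Prod.fst hΦa'
    have hqb : Quotient.mk (arrSetoid ρ) b' = Quotient.mk (arrSetoid ρ) b :=
      congrArg Prod.fst hΦb'
    have hga' : gT (K.src a') = g := congrArg Prod.snd hΦa'
    obtain ⟨k, hk⟩ := Quotient.exact hqa.symm
    obtain ⟨m, hm⟩ := Quotient.exact hqb.symm
    have hsb' : K.src b' = ρ.onObj m (K.src b) := by rw [← hm, ρ.src_onArr]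
    have hta' : K.tgt a' = ρ.onObj k (K.tgt a) := by rw [← hk, ρ.tgt_onArr]
    have h'' : K.tgt a' = K.src b' := h'
    have hmk : m = k := by
      apply obj_cancel ρ hsr (x := K.src b)
      rw [← hsb', ← h'', hta', h]
    have hbk : b' = ρ.onArr k b := by rw [← hmk]; exact hm.symm
    have hcomp : ρ.onArr k (K.comp a b h) = K.comp a' b' h'' := by
      rw [ρ.onArr_comp]
      exact comp_congr K hk hbk.symm (by rw [ρ.tgt_onArr, ρ.src_onArr, h]) h''
    show ea.symm (Quotient.mk (arrSetoid ρ) (K.comp a b h), g) = K.comp a' b' h''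
    rw [Equiv.symm_apply_eq, heaapp]
    show (Quotient.mk (arrSetoid ρ) (K.comp a b h), g) =
      (Quotient.mk (arrSetoid ρ) (K.comp a' b' h''), gT (K.src (K.comp a' b' h'')))
    rw [K.src_comp, hga', arrmk k hcomp]
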